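/- Let π be a permutation of [n] avoiding both 1342 and 1423, with π_1 = i and π_2 = j where j ≥ i+2 and j ≤ n-1. Then every element of the interval [i+1, j-1] occurs in π before every element of the interval [j+1, n], and the elements of [i+1, j-1] occur in π in decreasing order. -/

import Mathlib

/-- The word `w` contains the pattern `p`: some subsequence of `w` is
order-isomorphic to `p`. -/
def ContainsPat (w p : List ℕ) : Prop :=
  ∃ s : List ℕ, s.Sublist w ∧ s.length = p.length ∧
    ∀ i j : ℕ, i < p.length → j < p.length → (s[i]! < s[j]! ↔ p[i]! < p[j]!)

/-- The word `w` avoids the pattern `p`. -/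
def AvoidsPat (w p : List ℕ) : Prop := ¬ ContainsPat w p

/-- `π` is the one-line notation of a permutation of `{1,…,n}`. -/
def IsPermList (n : ℕ) (π : List ℕ) : Prop :=
  π.Perm ((List.range n).map (· + 1))

/-- The number of descents of a word. -/
def descList (π : List ℕ) : ℕ :=
  ((List.range (π.length - 1)).filter (fun t => decide (π[t + 1]! < π[t]!))).length

/-!
In `π = i :: j :: τ`, the letters `i` and `j` are the `1` and the `4` of a potential pattern. A
letter `y > j` before a letter `x ∈ (i, j)` in `τ` would give `i j y x ≅ 1342`, and two letters
`x < y` of `(i, j)` in increasing order in `τ` would give `i j x y ≅ 1423`.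
-/

namespace List

variable {α : Type*} [BEq α] [LawfulBEq α]

theorem pair_sublist_of_idxOf_lt {l : List α} {x y : α} (hy : y ∈ l)
    (h : l.idxOf x < l.idxOf y) : [x, y] <+ l := by
  have hyl := idxOf_lt_length_iff.2 hy
  have hxl : l.idxOf x < l.length := h.trans hyl
  simpa [getElem_idxOf] using
    map_getElem_sublist (l := l) (is := [⟨l.idxOf x, hxl⟩, ⟨l.idxOf y, hyl⟩]) (by simpa using h)

theorem idxOf_lt_idxOf_of_not_lt {l : List α} {x y : α} (hx : x ∈ l) (hxy : x ≠ y)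
    (h : ¬ l.idxOf y < l.idxOf x) : l.idxOf x < l.idxOf y :=
  lt_of_le_of_ne (not_lt.1 h) fun he => hxy ((idxOf_inj hx).1 he)

theorem eq_cons_cons_of_getElem!_one_ne_zero {l : List ℕ} (h : l[1]! ≠ 0) :
    l = l[0]! :: l[1]! :: l.drop 2 := by
  match l, h with
  | _ :: _ :: _, _ => rfl

end List

theorem IsPermList.mem_iff {n : ℕ} {π : List ℕ} (hπ : IsPermList n π) {x : ℕ} :
    x ∈ π ↔ 1 ≤ x ∧ x ≤ n := by
  rw [List.Perm.mem_iff hπ, List.mem_map]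
  constructor
  · rintro ⟨a, ha, rfl⟩
    simp only [List.mem_range] at ha
    omega
  · rintro ⟨hx1, hxn⟩
    exact ⟨x - 1, List.mem_range.2 (by omega), by omega⟩

theorem containsPat_1342_of_sublist {w : List ℕ} {a b c d : ℕ} (hs : [a, c, d, b].Sublist w)
    (hab : a < b) (hbc : b < c) (hcd : c < d) : ContainsPat w [1, 3, 4, 2] := by
  refine ⟨_, hs, rfl, fun p q (hp : p < 4) (hq : q < 4) => ?_⟩
  interval_cases p <;> interval_cases q <;> simp <;> omega

theorem containsPat_1423_of_sublist {w : List ℕ} {a b c d : ℕ} (hs : [a, d, b, c].Sublist w)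
    (hab : a < b) (hbc : b < c) (hcd : c < d) : ContainsPat w [1, 4, 2, 3] := by
  refine ⟨_, hs, rfl, fun p q (hp : p < 4) (hq : q < 4) => ?_⟩
  interval_cases p <;> interval_cases q <;> simp <;> omega

theorem idxOf_lt_idxOf_of_avoids_1342 {i j x y : ℕ} {τ : List ℕ}
    (h : AvoidsPat (i :: j :: τ) [1, 3, 4, 2]) (hx : x ∈ τ)
    (hix : i < x) (hxj : x < j) (hjy : j < y) :
    (i :: j :: τ).idxOf x < (i :: j :: τ).idxOf y := by
  suffices τ.idxOf x < τ.idxOf y by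
    simpa [hix.ne, hxj.ne', (hix.trans (hxj.trans hjy)).ne, hjy.ne] using this
  refine List.idxOf_lt_idxOf_of_not_lt hx (by omega) fun hyx => h ?_
  exact containsPat_1342_of_sublist
    (((List.pair_sublist_of_idxOf_lt hx hyx).cons_cons j).cons_cons i) hix hxj hjy

theorem idxOf_lt_idxOf_of_avoids_1423 {i j x y : ℕ} {τ : List ℕ}
    (h : AvoidsPat (i :: j :: τ) [1, 4, 2, 3]) (hy : y ∈ τ)
    (hix : i < x) (hxy : x < y) (hyj : y < j) :
    (i :: j :: τ).idxOf y < (i :: j :: τ).idxOf x := by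
  suffices τ.idxOf y < τ.idxOf x by
    simpa [hix.ne, (hxy.trans hyj).ne', (hix.trans hxy).ne, hyj.ne'] using this
  refine List.idxOf_lt_idxOf_of_not_lt hy (by omega) fun hxy' => h ?_
  exact containsPat_1423_of_sublist
    (((List.pair_sublist_of_idxOf_lt hy hxy').cons_cons j).cons_cons i) hix hxy hyj

theorem stmt13_general (n i j : ℕ) (π : List ℕ)
    (hπ : IsPermList n π) (h1 : AvoidsPat π [1,3,4,2]) (h2 : AvoidsPat π [1,4,2,3])
    (hfirst : π[0]! = i) (hsecond : π[1]! = j) :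
    (∀ x y, i + 1 ≤ x → x ≤ j - 1 → j + 1 ≤ y → y ≤ n →
      π.idxOf x < π.idxOf y) ∧
    (∀ x y, i + 1 ≤ x → x < y → y ≤ j - 1 → π.idxOf y < π.idxOf x) := by
  -- `j = 0` includes the junk case `π.length < 2`; both claims are then vacuous.
  obtain rfl | hj := eq_or_ne j 0
  · constructor <;> intros <;> omega
  obtain ⟨τ, rfl⟩ : ∃ τ, π = i :: j :: τ :=
    ⟨_, hfirst ▸ hsecond ▸ List.eq_cons_cons_of_getElem!_one_ne_zero (hsecond ▸ hj)⟩
  have hjn : j ≤ n := (hπ.mem_iff.1 (by simp)).2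
  have mem_tail : ∀ x, i < x → x ≠ j → x ≤ n → x ∈ τ := fun x hix hxj hxn => by
    simpa [hix.ne', hxj] using hπ.mem_iff.2 ⟨by omega, hxn⟩
  refine ⟨fun x y hix hxj hjy hyn => ?_, fun x y hix hxy hyj => ?_⟩
  · exact idxOf_lt_idxOf_of_avoids_1342 h1 (mem_tail x (by omega) (by omega) (by omega))
      (by omega) (by omega) (by omega)
  · exact idxOf_lt_idxOf_of_avoids_1423 h2 (mem_tail y (by omega) (by omega) (by omega))
      (by omega) hxy (by omega)

/-- If a `{1342,1423}`-avoiding permutation of `[n]` starts `i, j` with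
`i+2 ≤ j ≤ n-1`, then every element of `[i+1, j-1]` occurs before every element
of `[j+1, n]`, and the elements of `[i+1, j-1]` occur in decreasing order. -/
theorem stmt13 (n i j : ℕ) (π : List ℕ)
    (hπ : IsPermList n π) (h1 : AvoidsPat π [1,3,4,2]) (h2 : AvoidsPat π [1,4,2,3])
    (hfirst : π[0]! = i) (hsecond : π[1]! = j) (hij : i + 2 ≤ j) (hjn : j ≤ n - 1) :
    (∀ x y, i + 1 ≤ x → x ≤ j - 1 → j + 1 ≤ y → y ≤ n →
      π.idxOf x < π.idxOf y) ∧
    (∀ x y, i + 1 ≤ x → x < y → y ≤ j - 1 → π.idxOf y < π.idxOf x) :=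
  stmt13_general n i j π hπ h1 h2 hfirst hsecond
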